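/- For all real α, β, γ > 0, the polynomial D - 4N, where N and D are the numerator and denominator of the explicit rational expression for B(α,β,γ) on CP2 # 3 CP2-bar given in Appendix B, is strictly positive; indeed it is bounded below by 4(α^2 - α^4 + α^6) + 4(β^2 - β^4 + β^6) + 4(γ^2 - γ^4 + γ^6) > 0. Consequently B(α,β,γ) < 1/4. -/
import Mathlib
set_option maxHeartbeats 0
set_option maxRecDepth 100000

/-- Numerator of the Futaki term 𝓑 on ℂP₂ # 3 ℂP₂-bar (Kähler class (α,β,γ,1)),
as displayed in Appendix B. -/
noncomputable def futakiNum3 (α β γ : ℝ) : ℝ :=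
  γ^2*(1 + 4*γ + 6*γ^2 + 4*γ^3) +
  β*γ*(-1 + 3*γ + 18*γ^2 + 26*γ^3 + 16*γ^4) +
  2*β^5*(2 + 8*γ + 21*γ^2 + 33*γ^3 + 27*γ^4 + 9*γ^5) +
  β^2*(1 + 3*γ + 27*γ^2 + 79*γ^3 + 89*γ^4 + 42*γ^5) +
  β^4*(6 + 26*γ + 89*γ^2 + 168*γ^3 + 150*γ^4 + 54*γ^5) +
  β^3*(4 + 18*γ + 79*γ^2 + 173*γ^3 + 168*γ^4 + 66*γ^5) +
  2*α^5*(2 + 9*β^5 + 8*γ + 21*γ^2 + 33*γ^3 + 27*γ^4 + 9*γ^5 +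
    9*β^4*(3 + γ) + 3*β^2*(7 + 5*γ) + 3*β^3*(11 + 6*γ) +
    β*(8 + 12*γ + 15*γ^2 + 18*γ^3 + 9*γ^4)) +
  α^4*(168*γ^3 + 150*γ^4 + 54*γ^5 + 18*β^5*(3 + γ) +
    β^4*(150 + 72*γ - 18*γ^2) +
    6*β^3*(28 + 12*γ - 15*γ^2 - 6*γ^3) +
    6 + 26*γ + 89*γ^2 +
    β^2*(89 - 6*γ - 162*γ^2 - 90*γ^3 - 18*γ^4) +
    2*β*(13 + 2*γ - 3*γ^2 + 36*γ^3 + 36*γ^4 + 9*γ^5)) +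
  α^2*(1 + 3*γ + 27*γ^2 + 79*γ^3 + 89*γ^4 + 42*γ^5 +
    6*β^5*(7 + 5*γ) -
    β^4*(-89 + 6*γ + 162*γ^2 + 90*γ^3 + 18*γ^4) +
    3*β^2*(9 - 56*γ - 165*γ^2 - 144*γ^3 - 54*γ^4) -
    β^3*(-79 + 111*γ + 432*γ^2 + 324*γ^3 + 90*γ^4) +
    3*β*(1 - 23*γ - 56*γ^2 - 37*γ^3 - 2*γ^4 + 10*γ^5)) +
  α^3*(4 + 18*γ + 79*γ^2 + 173*γ^3 + 168*γ^4 + 66*γ^5 +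
    6*β^5*(11 + 6*γ) +
    6*β^4*(28 + 12*γ - 15*γ^2 - 6*γ^3) +
    β^3*(173 - 324*γ^2 - 216*γ^3 - 36*γ^4) -
    β^2*(-79 + 111*γ + 432*γ^2 + 324*γ^3 + 90*γ^4) +
    β*(18 - 46*γ - 111*γ^2 + 72*γ^4 + 36*γ^5)) +
  α*(2*β^5*(8 + 12*γ + 15*γ^2 + 18*γ^3 + 9*γ^4) +
    γ*(-1 + 3*γ + 18*γ^2 + 26*γ^3 + 16*γ^4) +
    2*β^4*(13 + 2*γ - 3*γ^2 + 36*γ^3 + 36*γ^4 + 9*γ^5) +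
    3*β^2*(1 - 23*γ - 56*γ^2 - 37*γ^3 - 2*γ^4 + 10*γ^5) +
    β*(-1 - 30*γ - 69*γ^2 - 46*γ^3 + 4*γ^4 + 24*γ^5) +
    β^3*(18 - 46*γ - 111*γ^2 + 72*γ^4 + 36*γ^5))

/-- Denominator of the Futaki term 𝓑 on ℂP₂ # 3 ℂP₂-bar (Kähler class
(α,β,γ,1)), as displayed in Appendix B. -/
noncomputable def futakiDen3 (α β γ : ℝ) : ℝ :=
  (1 + 2*γ + 2*β*(1+γ) + 2*α*(1 + β + γ)) *
  (1 + 10*γ + 36*γ^2 + 64*γ^3 + 60*γ^4 + 24*γ^5 +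
    24*β^5*(1+γ)^5 + 24*α^5*(1 + β + γ)^5 +
    12*β^4*(1+γ)^2*(5 + 20*γ + 23*γ^2 + 10*γ^3) +
    16*β^3*(4 + 28*γ + 72*γ^2 + 90*γ^3 + 57*γ^4 + 15*γ^5) +
    12*β^2*(3 + 24*γ + 69*γ^2 + 96*γ^3 + 68*γ^4 + 20*γ^5) +
    2*β*(5 + 45*γ + 144*γ^2 + 224*γ^3 + 180*γ^4 + 60*γ^5) +
    12*α^4*(1 + β + γ)^2*(5 + 20*γ + 23*γ^2 + 10*γ^3 + 10*β^3*(1+γ) +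
      β^2*(23 + 46*γ + 16*γ^2) + 2*β*(10 + 30*γ + 23*γ^2 + 5*γ^3)) +
    16*α^3*(4 + 28*γ + 72*γ^2 + 90*γ^3 + 57*γ^4 + 15*γ^5 +
      15*β^5*(1+γ)^2 +
      3*β^4*(19 + 57*γ + 50*γ^2 + 13*γ^3) +
      3*β^3*(30 + 120*γ + 155*γ^2 + 78*γ^3 + 13*γ^4) +
      3*β^2*(24 + 120*γ + 206*γ^2 + 155*γ^3 + 50*γ^4 + 5*γ^5) +
      β*(28 + 168*γ + 360*γ^2 + 360*γ^3 + 171*γ^4 + 30*γ^5)) +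
    12*α^2*(3 + 24*γ + 69*γ^2 + 96*γ^3 + 68*γ^4 + 20*γ^5 +
      20*β^5*(1+γ)^3 +
      β^4*(68 + 272*γ + 366*γ^2 + 200*γ^3 + 36*γ^4) +
      4*β^3*(24 + 120*γ + 206*γ^2 + 155*γ^3 + 50*γ^4 + 5*γ^5) +
      2*β*(12 + 84*γ + 207*γ^2 + 240*γ^3 + 136*γ^4 + 30*γ^5) +
      β^2*(69 + 414*γ + 864*γ^2 + 824*γ^3 + 366*γ^4 + 60*γ^5)) +
    2*α*(60*β^5*(1+γ)^4 +
      12*β^4*(15 + 75*γ + 136*γ^2 + 114*γ^3 + 43*γ^4 + 5*γ^5) +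
      12*β^2*(12 + 84*γ + 207*γ^2 + 240*γ^3 + 136*γ^4 + 30*γ^5) +
      8*β^3*(28 + 168*γ + 360*γ^2 + 360*γ^3 + 171*γ^4 + 30*γ^5) +
      5 + 45*γ + 144*γ^2 + 224*γ^3 + 180*γ^4 + 60*γ^5 +
      3*β*(15 + 120*γ + 336*γ^2 + 448*γ^3 + 300*γ^4 + 80*γ^5)))

noncomputable def cert3_0 (α β γ : ℝ) : ℝ :=
  1 +
  12*γ +
  48*γ^2 +
  120*γ^3 +
  168*γ^4 +
  128*γ^5 +
  44*γ^6 +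
  12*β +
  136*β*γ +
  548*β*γ^2 +
  1152*β*γ^3 +
  1400*β*γ^4 +
  944*β*γ^5 +
  288*β*γ^6 +
  48*β^2 +
  548*β^2*γ +
  2052*β^2*γ^2 +
  3964*β^2*γ^3 +
  4380*β^2*γ^4 +
  2664*β^2*γ^5 +
  720*β^2*γ^6 +
  120*β^3 +
  1152*β^3*γ +
  3964*β^3*γ^2 +
  7012*β^3*γ^3 +
  7056*β^3*γ^4 +
  3912*β^3*γ^5 +
  960*β^3*γ^6 +
  168*β^4 +
  1400*β^4*γ +
  4380*β^4*γ^2 +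
  7056*β^4*γ^3 +
  6444*β^4*γ^4 +
  3240*β^4*γ^5 +
  720*β^4*γ^6 +
  128*β^5 +
  944*β^5*γ +
  2664*β^5*γ^2 +
  3912*β^5*γ^3 +
  3240*β^5*γ^4

noncomputable def cert3_1 (α β γ : ℝ) : ℝ :=
  1464*β^5*γ^5 +
  288*β^5*γ^6 +
  44*β^6 +
  288*β^6*γ +
  720*β^6*γ^2 +
  960*β^6*γ^3 +
  720*β^6*γ^4 +
  288*β^6*γ^5 +
  48*β^6*γ^6 +
  12*α +
  136*α*γ +
  548*α*γ^2 +
  1152*α*γ^3 +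
  1400*α*γ^4 +
  944*α*γ^5 +
  288*α*γ^6 +
  136*α*β +
  1440*α*β*γ +
  5316*α*β*γ^2 +
  9976*α*β*γ^3 +
  10512*α*β*γ^4 +
  5952*α*β*γ^5 +
  1440*α*β*γ^6 +
  548*α*β^2 +
  5316*α*β^2*γ +
  17952*α*β^2*γ^2 +
  30404*α*β^2*γ^3 +
  28440*α*β^2*γ^4 +
  14040*α*β^2*γ^5 +
  2880*α*β^2*γ^6 +
  1152*α*β^3 +
  9976*α*β^3*γ +
  30404*α*β^3*γ^2 +
  46224*α*β^3*γ^3 +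
  38352*α*β^3*γ^4 +
  16560*α*β^3*γ^5 +
  2880*α*β^3*γ^6 +
  1400*α*β^4 +
  10512*α*β^4*γ +
  28440*α*β^4*γ^2

noncomputable def cert3_2 (α β γ : ℝ) : ℝ :=
  38352*α*β^4*γ^3 +
  27888*α*β^4*γ^4 +
  10296*α*β^4*γ^5 +
  1440*α*β^4*γ^6 +
  944*α*β^5 +
  5952*α*β^5*γ +
  14040*α*β^5*γ^2 +
  16560*α*β^5*γ^3 +
  10296*α*β^5*γ^4 +
  3072*α*β^5*γ^5 +
  288*α*β^5*γ^6 +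
  288*α*β^6 +
  1440*α*β^6*γ +
  2880*α*β^6*γ^2 +
  2880*α*β^6*γ^3 +
  1440*α*β^6*γ^4 +
  288*α*β^6*γ^5 +
  48*α^2 +
  548*α^2*γ +
  2052*α^2*γ^2 +
  3964*α^2*γ^3 +
  4380*α^2*γ^4 +
  2664*α^2*γ^5 +
  720*α^2*γ^6 +
  548*α^2*β +
  5316*α^2*β*γ +
  17952*α^2*β*γ^2 +
  30404*α^2*β*γ^3 +
  28440*α^2*β*γ^4 +
  14040*α^2*β*γ^5 +
  2880*α^2*β*γ^6 +
  2052*α^2*β^2 +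
  17952*α^2*β^2*γ +
  54252*α^2*β^2*γ^2 +
  80640*α^2*β^2*γ^3 +
  64512*α^2*β^2*γ^4 +
  26400*α^2*β^2*γ^5 +
  4320*α^2*β^2*γ^6 +
  3964*α^2*β^3 +
  30404*α^2*β^3*γ

noncomputable def cert3_3 (α β γ : ℝ) : ℝ :=
  80640*α^2*β^3*γ^2 +
  103584*α^2*β^3*γ^3 +
  69720*α^2*β^3*γ^4 +
  23136*α^2*β^3*γ^5 +
  2880*α^2*β^3*γ^6 +
  4380*α^2*β^4 +
  28440*α^2*β^4*γ +
  64512*α^2*β^4*γ^2 +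
  69720*α^2*β^4*γ^3 +
  37992*α^2*β^4*γ^4 +
  9408*α^2*β^4*γ^5 +
  720*α^2*β^4*γ^6 +
  2664*α^2*β^5 +
  14040*α^2*β^5*γ +
  26400*α^2*β^5*γ^2 +
  23136*α^2*β^5*γ^3 +
  9408*α^2*β^5*γ^4 +
  1344*α^2*β^5*γ^5 +
  720*α^2*β^6 +
  2880*α^2*β^6*γ +
  4320*α^2*β^6*γ^2 +
  2880*α^2*β^6*γ^3 +
  720*α^2*β^6*γ^4 +
  120*α^3 +
  1152*α^3*γ +
  3964*α^3*γ^2 +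
  7012*α^3*γ^3 +
  7056*α^3*γ^4 +
  3912*α^3*γ^5 +
  960*α^3*γ^6 +
  1152*α^3*β +
  9976*α^3*β*γ +
  30404*α^3*β*γ^2 +
  46224*α^3*β*γ^3 +
  38352*α^3*β*γ^4 +
  16560*α^3*β*γ^5 +
  2880*α^3*β*γ^6 +
  3964*α^3*β^2 +
  30404*α^3*β^2*γ +
  80640*α^3*β^2*γ^2

noncomputable def cert3_4 (α β γ : ℝ) : ℝ :=
  103584*α^3*β^2*γ^3 +
  69720*α^3*β^2*γ^4 +
  23136*α^3*β^2*γ^5 +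
  2880*α^3*β^2*γ^6 +
  7012*α^3*β^3 +
  46224*α^3*β^3*γ +
  103584*α^3*β^3*γ^2 +
  108576*α^3*β^3*γ^3 +
  56400*α^3*β^3*γ^4 +
  13248*α^3*β^3*γ^5 +
  960*α^3*β^3*γ^6 +
  7056*α^3*β^4 +
  38352*α^3*β^4*γ +
  69720*α^3*β^4*γ^2 +
  56400*α^3*β^4*γ^3 +
  20448*α^3*β^4*γ^4 +
  2592*α^3*β^4*γ^5 +
  3912*α^3*β^5 +
  16560*α^3*β^5*γ +
  23136*α^3*β^5*γ^2 +
  13248*α^3*β^5*γ^3 +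
  2592*α^3*β^5*γ^4 +
  960*α^3*β^6 +
  2880*α^3*β^6*γ +
  2880*α^3*β^6*γ^2 +
  960*α^3*β^6*γ^3 +
  168*α^4 +
  1400*α^4*γ +
  4380*α^4*γ^2 +
  7056*α^4*γ^3 +
  6444*α^4*γ^4 +
  3240*α^4*γ^5 +
  720*α^4*γ^6 +
  1400*α^4*β +
  10512*α^4*β*γ +
  28440*α^4*β*γ^2 +
  38352*α^4*β*γ^3 +
  27888*α^4*β*γ^4 +
  10296*α^4*β*γ^5 +
  1440*α^4*β*γ^6

noncomputable def cert3_5 (α β γ : ℝ) : ℝ :=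
  4380*α^4*β^2 +
  28440*α^4*β^2*γ +
  64512*α^4*β^2*γ^2 +
  69720*α^4*β^2*γ^3 +
  37992*α^4*β^2*γ^4 +
  9408*α^4*β^2*γ^5 +
  720*α^4*β^2*γ^6 +
  7056*α^4*β^3 +
  38352*α^4*β^3*γ +
  69720*α^4*β^3*γ^2 +
  56400*α^4*β^3*γ^3 +
  20448*α^4*β^3*γ^4 +
  2592*α^4*β^3*γ^5 +
  6444*α^4*β^4 +
  27888*α^4*β^4*γ +
  37992*α^4*β^4*γ^2 +
  20448*α^4*β^4*γ^3 +
  3744*α^4*β^4*γ^4 +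
  3240*α^4*β^5 +
  10296*α^4*β^5*γ +
  9408*α^4*β^5*γ^2 +
  2592*α^4*β^5*γ^3 +
  720*α^4*β^6 +
  1440*α^4*β^6*γ +
  720*α^4*β^6*γ^2 +
  128*α^5 +
  944*α^5*γ +
  2664*α^5*γ^2 +
  3912*α^5*γ^3 +
  3240*α^5*γ^4 +
  1464*α^5*γ^5 +
  288*α^5*γ^6 +
  944*α^5*β +
  5952*α^5*β*γ +
  14040*α^5*β*γ^2 +
  16560*α^5*β*γ^3 +
  10296*α^5*β*γ^4 +
  3072*α^5*β*γ^5 +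
  288*α^5*β*γ^6 +
  2664*α^5*β^2

noncomputable def cert3_6 (α β γ : ℝ) : ℝ :=
  14040*α^5*β^2*γ +
  26400*α^5*β^2*γ^2 +
  23136*α^5*β^2*γ^3 +
  9408*α^5*β^2*γ^4 +
  1344*α^5*β^2*γ^5 +
  3912*α^5*β^3 +
  16560*α^5*β^3*γ +
  23136*α^5*β^3*γ^2 +
  13248*α^5*β^3*γ^3 +
  2592*α^5*β^3*γ^4 +
  3240*α^5*β^4 +
  10296*α^5*β^4*γ +
  9408*α^5*β^4*γ^2 +
  2592*α^5*β^4*γ^3 +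
  1464*α^5*β^5 +
  3072*α^5*β^5*γ +
  1344*α^5*β^5*γ^2 +
  288*α^5*β^6 +
  288*α^5*β^6*γ +
  44*α^6 +
  288*α^6*γ +
  720*α^6*γ^2 +
  960*α^6*γ^3 +
  720*α^6*γ^4 +
  288*α^6*γ^5 +
  48*α^6*γ^6 +
  288*α^6*β +
  1440*α^6*β*γ +
  2880*α^6*β*γ^2 +
  2880*α^6*β*γ^3 +
  1440*α^6*β*γ^4 +
  288*α^6*β*γ^5 +
  720*α^6*β^2 +
  2880*α^6*β^2*γ +
  4320*α^6*β^2*γ^2 +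
  2880*α^6*β^2*γ^3 +
  720*α^6*β^2*γ^4 +
  960*α^6*β^3 +
  2880*α^6*β^3*γ +
  2880*α^6*β^3*γ^2

noncomputable def cert3_7 (α β γ : ℝ) : ℝ :=
  960*α^6*β^3*γ^3 +
  720*α^6*β^4 +
  1440*α^6*β^4*γ +
  720*α^6*β^4*γ^2 +
  288*α^6*β^5 +
  288*α^6*β^5*γ +
  48*α^6*β^6

/-- For all α, β, γ > 0 the polynomial D - 4N for the Futaki term on
ℂP₂ # 3 ℂP₂-bar is bounded below by
4(α²-α⁴+α⁶) + 4(β²-β⁴+β⁶) + 4(γ²-γ⁴+γ⁶) > 0, hence is strictly positive;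
consequently 𝓑 = N/D < 1/4. -/
theorem futaki_term_lt_quarter_three_points (α β γ : ℝ)
    (hα : 0 < α) (hβ : 0 < β) (hγ : 0 < γ) :
    4*(α^2 - α^4 + α^6) + 4*(β^2 - β^4 + β^6) + 4*(γ^2 - γ^4 + γ^6) ≤
      futakiDen3 α β γ - 4 * futakiNum3 α β γ ∧
    0 < futakiDen3 α β γ - 4 * futakiNum3 α β γ ∧
    futakiNum3 α β γ / futakiDen3 α β γ < 1 / 4 := by
  have hR : futakiDen3 α β γ - 4 * futakiNum3 α β γ =
      (4*(α^2 - α^4 + α^6) + 4*(β^2 - β^4 + β^6) + 4*(γ^2 - γ^4 + γ^6)) +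
      (cert3_0 α β γ + cert3_1 α β γ + cert3_2 α β γ + cert3_3 α β γ + cert3_4 α β γ + cert3_5 α β γ + cert3_6 α β γ + cert3_7 α β γ) := by
    unfold futakiDen3 futakiNum3 cert3_0 cert3_1 cert3_2 cert3_3 cert3_4 cert3_5 cert3_6 cert3_7
    ring
  have hRpos : (0:ℝ) ≤ cert3_0 α β γ + cert3_1 α β γ + cert3_2 α β γ + cert3_3 α β γ + cert3_4 α β γ + cert3_5 α β γ + cert3_6 α β γ + cert3_7 α β γ := by
    have h0 : (0:ℝ) ≤ α := hα.le
    have h1 : (0:ℝ) ≤ β := hβ.le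
    have h2 : (0:ℝ) ≤ γ := hγ.le
    unfold cert3_0 cert3_1 cert3_2 cert3_3 cert3_4 cert3_5 cert3_6 cert3_7
    positivity
  have h1 : 4*(α^2 - α^4 + α^6) + 4*(β^2 - β^4 + β^6) + 4*(γ^2 - γ^4 + γ^6) ≤
      futakiDen3 α β γ - 4 * futakiNum3 α β γ := by linarith
  have hb : (0:ℝ) < 4*(α^2 - α^4 + α^6) + 4*(β^2 - β^4 + β^6) + 4*(γ^2 - γ^4 + γ^6) := by
    nlinarith [sq_nonneg (α^2 - α), sq_nonneg (β^2 - β), sq_nonneg (γ^2 - γ),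
      pow_pos hα 2, pow_pos hβ 2, pow_pos hγ 2, pow_pos hα 6, pow_pos hβ 6, pow_pos hγ 6]
  have h2 : 0 < futakiDen3 α β γ - 4 * futakiNum3 α β γ := lt_of_lt_of_le hb h1
  have hD : 0 < futakiDen3 α β γ := by unfold futakiDen3; positivity
  refine ⟨h1, h2, ?_⟩
  rw [div_lt_div_iff₀ hD (by norm_num : (0:ℝ) < 4)]
  linarith
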